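/- Let ε ≥ 0, η > 0, R_E > 0 and 0 < R < R_E. Let w, ψ : ℝ × ℝ² → ℝ be smooth functions such that for every t ∈ ℝ: on Ω, ∂_t(w − ε·Δw) = (1/R)·Δw + R·ψ_θ + J(ψ, w − ε·Δw) and ∂_t(ε·Δ²ψ − Δψ) = −(1/R)·Δ²ψ + ε·R·Δ(w_θ) + J(Δψ − ε·Δ²ψ, ψ) + ε·J(Δw, w); on ∂Ω, w(t,·) = ψ(t,·) = 0 and ∇ψ(t,·) = 0; and, with E(t) = ‖w‖² + ε‖∇w‖² + ‖∇ψ‖² + ε‖Δψ‖², I₁(t) = ‖∇w‖² + ‖Δψ‖², I₂(t) = ⟨ψ_θ, w − ε·Δw⟩, the solution satisfies for all t the energy-stability bound I₂(t) ≤ I₁(t)/R_E² and the Poincaré inequalities ‖∇w(t,·)‖² ≥ η‖w(t,·)‖² and ‖Δψ(t,·)‖² ≥ η‖∇ψ(t,·)‖². Then, with c_R = (2Rη/(1+εη))·(1/R² − 1/R_E²) > 0, the energy decays exponentially: E(t) ≤ e^{−c_R·t}·E(0) for all t ≥ 0. -/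

import Mathlib

open MeasureTheory

noncomputable section

/-- Partial derivative with respect to the first (x) variable. -/
def pdx (f : ℝ × ℝ → ℝ) : ℝ × ℝ → ℝ := fun p => deriv (fun x => f (x, p.2)) p.1

/-- Partial derivative with respect to the second (y) variable. -/
def pdy (f : ℝ × ℝ → ℝ) : ℝ × ℝ → ℝ := fun p => deriv (fun y => f (p.1, y)) p.2

/-- The Laplacian Δf = f_xx + f_yy. -/
def lap (f : ℝ × ℝ → ℝ) : ℝ × ℝ → ℝ := fun p => pdx (pdx f) p + pdy (pdy f) p

/-- The azimuthal derivative f_θ = x f_y − y f_x. -/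
def azim (f : ℝ × ℝ → ℝ) : ℝ × ℝ → ℝ := fun p => p.1 * pdy f p - p.2 * pdx f p

/-- The Jacobian (advection) bilinear form J(f,g) = f_x g_y − f_y g_x. -/
def jac (f g : ℝ × ℝ → ℝ) : ℝ × ℝ → ℝ := fun p => pdx f p * pdy g p - pdy f p * pdx g p

/-- The open unit disk Ω. -/
def disk : Set (ℝ × ℝ) := {p | p.1 ^ 2 + p.2 ^ 2 < 1}

/-- The unit circle ∂Ω. -/
def bdry : Set (ℝ × ℝ) := {p | p.1 ^ 2 + p.2 ^ 2 = 1}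

/-- The L² inner product ⟨f,g⟩ = ∫_Ω f g dA. -/
def ip (f g : ℝ × ℝ → ℝ) : ℝ := ∫ p in disk, f p * g p

/-- The squared L² norm ‖f‖² over Ω. -/
def nsq (f : ℝ × ℝ → ℝ) : ℝ := ∫ p in disk, (f p) ^ 2

/-- The squared L² norm of the gradient: ‖∇f‖² = ‖f_x‖² + ‖f_y‖². -/
def gradNsq (f : ℝ × ℝ → ℝ) : ℝ := nsq (pdx f) + nsq (pdy f)

/-!
Along a solution, `E' = 2 (-I₁ / R + R I₂)`. This is obtained by pairing the first equation with
`w` and the second with `ψ` and integrating by parts on the disk, where every boundary term vanishes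
by the no-slip conditions: the Jacobian terms cancel because `∫ f J(g, h)` is invariant under
cyclic permutations of `f, g, h`, and the two azimuthal terms combine into `I₂` because `∂_θ` is
skew-adjoint and commutes with `Δ`. The bound `I₂ ≤ I₁ / R_E²` turns this into
`E' ≤ -2R (1/R² - 1/R_E²) I₁`, the Poincaré inequalities give `η E ≤ (1 + εη) I₁`, and Grönwall's
inequality gives the exponential decay. All integrations by parts reduce to `∫_Ω ∂ₓF = 0` for `F`
vanishing on the circle, which is the fundamental theorem of calculus on each horizontal chord.
-/

open Set Function Filter
open scoped ContDiff

lemma fderiv_fderiv_apply_comm {E : Type*} [NormedAddCommGroup E] [NormedSpace ℝ E] {U : E → ℝ}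
    (hU : ContDiff ℝ ∞ U) (x v w : E) :
    fderiv ℝ (fun y => fderiv ℝ U y v) x w = fderiv ℝ (fun y => fderiv ℝ U y w) x v := by
  have hd : Differentiable ℝ (fderiv ℝ U) :=
    (hU.fderiv_right (m := ∞) le_rfl).differentiable (by simp)
  have key (v : E) :
      fderiv ℝ (fun y => fderiv ℝ U y v) x = fun w => fderiv ℝ (fderiv ℝ U) x w v := by
    ext w
    rw [fderiv_clm_apply (hd x) (differentiableAt_const v)]
    simp
  rw [key, key]
  exact hU.contDiffAt.isSymmSndFDerivAt (by simp; exact WithTop.coe_le_coe.mpr le_top) w v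

section Partials

variable {f g : ℝ × ℝ → ℝ}

lemma pdx_eq_fderiv {p : ℝ × ℝ} (hf : DifferentiableAt ℝ f p) :
    pdx f p = fderiv ℝ f p (1, 0) := by
  have hι : HasDerivAt (fun x : ℝ => (x, p.2)) ((1 : ℝ), (0 : ℝ)) p.1 :=
    (hasDerivAt_id p.1).prodMk (hasDerivAt_const p.1 p.2)
  exact (hf.hasFDerivAt.comp_hasDerivAt_of_eq p.1 hι rfl).deriv

lemma pdy_eq_fderiv {p : ℝ × ℝ} (hf : DifferentiableAt ℝ f p) :
    pdy f p = fderiv ℝ f p (0, 1) := by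
  have hι : HasDerivAt (fun y : ℝ => (p.1, y)) ((0 : ℝ), (1 : ℝ)) p.2 :=
    (hasDerivAt_const p.2 p.1).prodMk (hasDerivAt_id p.2)
  exact (hf.hasFDerivAt.comp_hasDerivAt_of_eq p.2 hι rfl).deriv

lemma pdx_eq_fun_fderiv (hf : Differentiable ℝ f) : pdx f = fun p => fderiv ℝ f p (1, 0) :=
  funext fun p => pdx_eq_fderiv (hf p)

lemma pdy_eq_fun_fderiv (hf : Differentiable ℝ f) : pdy f = fun p => fderiv ℝ f p (0, 1) :=
  funext fun p => pdy_eq_fderiv (hf p)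

lemma continuous_pdx (hf : ContDiff ℝ 1 f) : Continuous (pdx f) := by
  rw [pdx_eq_fun_fderiv (hf.differentiable one_ne_zero)]
  exact (hf.continuous_fderiv one_ne_zero).clm_apply continuous_const

lemma continuous_pdy (hf : ContDiff ℝ 1 f) : Continuous (pdy f) := by
  rw [pdy_eq_fun_fderiv (hf.differentiable one_ne_zero)]
  exact (hf.continuous_fderiv one_ne_zero).clm_apply continuous_const

@[fun_prop]
lemma contDiff_pdx (hf : ContDiff ℝ ∞ f) : ContDiff ℝ ∞ (pdx f) := by
  rw [pdx_eq_fun_fderiv (hf.differentiable (by simp))]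
  exact (hf.fderiv_right le_rfl).clm_apply contDiff_const

@[fun_prop]
lemma contDiff_pdy (hf : ContDiff ℝ ∞ f) : ContDiff ℝ ∞ (pdy f) := by
  rw [pdy_eq_fun_fderiv (hf.differentiable (by simp))]
  exact (hf.fderiv_right le_rfl).clm_apply contDiff_const

@[fun_prop]
lemma contDiff_lap (hf : ContDiff ℝ ∞ f) : ContDiff ℝ ∞ (lap f) := by
  unfold lap; fun_prop

@[fun_prop]
lemma contDiff_azim (hf : ContDiff ℝ ∞ f) : ContDiff ℝ ∞ (azim f) := by
  unfold azim; fun_prop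

@[fun_prop]
lemma contDiff_jac (hf : ContDiff ℝ ∞ f) (hg : ContDiff ℝ ∞ g) : ContDiff ℝ ∞ (jac f g) := by
  unfold jac; fun_prop

lemma pdx_add (hf : Differentiable ℝ f) (hg : Differentiable ℝ g) :
    pdx (fun q => f q + g q) = fun q => pdx f q + pdx g q := by
  ext q
  rw [pdx_eq_fderiv ((hf q).fun_add (hg q)), fderiv_fun_add (hf q) (hg q), pdx_eq_fderiv (hf q),
    pdx_eq_fderiv (hg q)]
  rfl

lemma pdy_add (hf : Differentiable ℝ f) (hg : Differentiable ℝ g) :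
    pdy (fun q => f q + g q) = fun q => pdy f q + pdy g q := by
  ext q
  rw [pdy_eq_fderiv ((hf q).fun_add (hg q)), fderiv_fun_add (hf q) (hg q), pdy_eq_fderiv (hf q),
    pdy_eq_fderiv (hg q)]
  rfl

lemma pdx_sub (hf : Differentiable ℝ f) (hg : Differentiable ℝ g) :
    pdx (fun q => f q - g q) = fun q => pdx f q - pdx g q := by
  ext q
  rw [pdx_eq_fderiv ((hf q).fun_sub (hg q)), fderiv_fun_sub (hf q) (hg q), pdx_eq_fderiv (hf q),
    pdx_eq_fderiv (hg q)]
  rfl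

lemma pdy_sub (hf : Differentiable ℝ f) (hg : Differentiable ℝ g) :
    pdy (fun q => f q - g q) = fun q => pdy f q - pdy g q := by
  ext q
  rw [pdy_eq_fderiv ((hf q).fun_sub (hg q)), fderiv_fun_sub (hf q) (hg q), pdy_eq_fderiv (hf q),
    pdy_eq_fderiv (hg q)]
  rfl

lemma pdx_mul (hf : Differentiable ℝ f) (hg : Differentiable ℝ g) :
    pdx (fun q => f q * g q) = fun q => pdx f q * g q + f q * pdx g q := by
  ext q
  rw [pdx_eq_fderiv ((hf q).fun_mul (hg q)), fderiv_fun_mul (hf q) (hg q), pdx_eq_fderiv (hf q),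
    pdx_eq_fderiv (hg q)]
  simp only [add_apply, smul_apply, smul_eq_mul]
  ring

lemma pdy_mul (hf : Differentiable ℝ f) (hg : Differentiable ℝ g) :
    pdy (fun q => f q * g q) = fun q => pdy f q * g q + f q * pdy g q := by
  ext q
  rw [pdy_eq_fderiv ((hf q).fun_mul (hg q)), fderiv_fun_mul (hf q) (hg q), pdy_eq_fderiv (hf q),
    pdy_eq_fderiv (hg q)]
  simp only [add_apply, smul_apply, smul_eq_mul]
  ring

lemma pdx_const_mul (c : ℝ) (hf : Differentiable ℝ f) :
    pdx (fun q => c * f q) = fun q => c * pdx f q := by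
  ext q
  rw [pdx_eq_fderiv ((hf q).const_mul c), fderiv_const_mul (hf q), pdx_eq_fderiv (hf q)]
  rfl

lemma pdy_const_mul (c : ℝ) (hf : Differentiable ℝ f) :
    pdy (fun q => c * f q) = fun q => c * pdy f q := by
  ext q
  rw [pdy_eq_fderiv ((hf q).const_mul c), fderiv_const_mul (hf q), pdy_eq_fderiv (hf q)]
  rfl

lemma pdx_const (c : ℝ) : pdx (fun _ => c) = fun _ => 0 := by
  ext q; exact deriv_const q.1 c

lemma pdy_const (c : ℝ) : pdy (fun _ => c) = fun _ => 0 := by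
  ext q; exact deriv_const q.2 c

lemma pdx_fst : pdx (fun q : ℝ × ℝ => q.1) = fun _ => 1 := by
  ext q; exact deriv_id q.1

lemma pdx_snd : pdx (fun q : ℝ × ℝ => q.2) = fun _ => 0 := by
  ext q; exact deriv_const q.1 q.2

lemma pdy_fst : pdy (fun q : ℝ × ℝ => q.1) = fun _ => 0 := by
  ext q; exact deriv_const q.2 q.1

lemma pdy_snd : pdy (fun q : ℝ × ℝ => q.2) = fun _ => 1 := by
  ext q; exact deriv_id q.2

lemma pdx_pdy_comm (hf : ContDiff ℝ ∞ f) : pdx (pdy f) = pdy (pdx f) := by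
  have hdf : Differentiable ℝ f := hf.differentiable (by simp)
  have hd (v : ℝ × ℝ) : Differentiable ℝ fun p => fderiv ℝ f p v :=
    ((hf.fderiv_right (m := ∞) le_rfl).clm_apply contDiff_const).differentiable (by simp)
  ext p
  rw [pdy_eq_fun_fderiv hdf, pdx_eq_fun_fderiv hdf, pdx_eq_fderiv (hd _ p), pdy_eq_fderiv (hd _ p),
    fderiv_fderiv_apply_comm hf]

end Partials

section Divergence

lemma isOpen_disk : IsOpen disk :=
  isOpen_lt (by fun_prop) continuous_const

lemma disk_subset_closedBall : disk ⊆ Metric.closedBall (0 : ℝ × ℝ) 1 := by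
  intro p (hp : p.1 ^ 2 + p.2 ^ 2 < 1)
  simp only [Metric.mem_closedBall, dist_zero_right, Prod.norm_def, Real.norm_eq_abs]
  exact max_le (abs_le_one_iff_mul_self_le_one.mpr (by nlinarith))
    (abs_le_one_iff_mul_self_le_one.mpr (by nlinarith))

lemma integrableOn_disk {f : ℝ × ℝ → ℝ} (hf : Continuous f) : IntegrableOn f disk :=
  (hf.continuousOn.integrableOn_compact (isCompact_closedBall _ _)).mono_set
    disk_subset_closedBall

-- Also for `1 ≤ c ^ 2`, where both sides are empty because `√` of a nonpositive number is `0`.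
lemma setOf_sq_add_sq_lt_one (c : ℝ) :
    {x : ℝ | x ^ 2 + c ^ 2 < 1} = Ioo (-√(1 - c ^ 2)) √(1 - c ^ 2) := by
  ext x
  simp only [mem_ofPred_eq, mem_Ioo, ← Real.sq_lt]
  constructor <;> intro h <;> linarith

lemma integral_deriv_eq_zero_of_sq_add_sq_lt_one {g : ℝ → ℝ} (hg : ContDiff ℝ 1 g) (c : ℝ)
    (hb : ∀ x, x ^ 2 + c ^ 2 = 1 → g x = 0) :
    ∫ x in {x : ℝ | x ^ 2 + c ^ 2 < 1}, deriv g x = 0 := by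
  rw [setOf_sq_add_sq_lt_one, ← integral_Ioc_eq_integral_Ioo,
    ← intervalIntegral.integral_of_le (neg_le_self (Real.sqrt_nonneg _)),
    intervalIntegral.integral_deriv_eq_sub (fun x _ => (hg.differentiable one_ne_zero) x)
      ((hg.continuous_deriv le_rfl).intervalIntegrable _ _)]
  set r := √(1 - c ^ 2)
  rcases le_or_gt (c ^ 2) 1 with hc | hc
  · have hr : r ^ 2 = 1 - c ^ 2 := Real.sq_sqrt (by linarith)
    rw [hb r (by linarith), hb (-r) (by rw [neg_sq]; linarith), sub_zero]
  · have hr : r = 0 := Real.sqrt_eq_zero'.mpr (by linarith)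
    rw [hr, neg_zero, sub_self]

lemma integral_disk_pdx_eq_zero {F : ℝ × ℝ → ℝ} (hF : ContDiff ℝ 1 F)
    (hb : ∀ p ∈ bdry, F p = 0) : ∫ p in disk, pdx F p = 0 := by
  have hint : Integrable (disk.indicator (pdx F)) (volume.prod volume) :=
    (integrableOn_disk (continuous_pdx hF)).integrable_indicator isOpen_disk.measurableSet
  rw [← integral_indicator isOpen_disk.measurableSet, Measure.volume_eq_prod,
    integral_prod_symm _ hint]
  have hslice (y : ℝ) : ∫ x, disk.indicator (pdx F) (x, y) = 0 := by
    rw [← integral_deriv_eq_zero_of_sq_add_sq_lt_one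
        (hF.comp (contDiff_id.prodMk contDiff_const)) y fun x hx => hb (x, y) hx,
      ← integral_indicator (measurableSet_lt (by fun_prop) measurable_const)]
    rfl
  simp only [hslice, integral_zero]

lemma integral_disk_pdy_eq_zero {F : ℝ × ℝ → ℝ} (hF : ContDiff ℝ 1 F)
    (hb : ∀ p ∈ bdry, F p = 0) : ∫ p in disk, pdy F p = 0 := by
  have hint : Integrable (disk.indicator (pdy F)) (volume.prod volume) :=
    (integrableOn_disk (continuous_pdy hF)).integrable_indicator isOpen_disk.measurableSet
  rw [← integral_indicator isOpen_disk.measurableSet, Measure.volume_eq_prod,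
    integral_prod _ hint]
  have hslice (x : ℝ) : ∫ y, disk.indicator (pdy F) (x, y) = 0 := by
    rw [← integral_deriv_eq_zero_of_sq_add_sq_lt_one
        (hF.comp (contDiff_const.prodMk contDiff_id)) x
        fun y hy => hb (x, y) (by rw [bdry, mem_ofPred_eq]; linarith),
      ← integral_indicator (measurableSet_lt (by fun_prop) measurable_const)]
    simp only [indicator, disk, mem_ofPred_eq, add_comm]
    rfl
  simp only [hslice, integral_zero]

end Divergence

section Green

variable {f g h u v : ℝ × ℝ → ℝ}

lemma integral_disk_add (hf : Continuous f) (hg : Continuous g) :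
    ∫ p in disk, (f p + g p) = (∫ p in disk, f p) + ∫ p in disk, g p :=
  integral_add (integrableOn_disk hf) (integrableOn_disk hg)

lemma integral_disk_sub (hf : Continuous f) (hg : Continuous g) :
    ∫ p in disk, (f p - g p) = (∫ p in disk, f p) - ∫ p in disk, g p :=
  integral_sub (integrableOn_disk hf) (integrableOn_disk hg)

lemma ip_comm (f g : ℝ × ℝ → ℝ) : ip f g = ip g f := by
  simp only [ip, mul_comm]

lemma ip_congr_right (hg : EqOn g h disk) : ip f g = ip f h :=
  setIntegral_congr_fun isOpen_disk.measurableSet fun p hp => by rw [hg hp]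

lemma ip_add_right (hf : Continuous f) (hg : Continuous g) (hh : Continuous h) :
    ip f (fun q => g q + h q) = ip f g + ip f h := by
  simp only [ip, mul_add]
  exact integral_disk_add (hf.mul hg) (hf.mul hh)

lemma ip_sub_right (hf : Continuous f) (hg : Continuous g) (hh : Continuous h) :
    ip f (fun q => g q - h q) = ip f g - ip f h := by
  simp only [ip, mul_sub]
  exact integral_disk_sub (hf.mul hg) (hf.mul hh)

lemma ip_const_mul_right (c : ℝ) : ip f (fun q => c * g q) = c * ip f g := by
  simp only [ip, mul_left_comm _ c]
  exact integral_const_mul c _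

def gradIp (f g : ℝ × ℝ → ℝ) : ℝ := ip (pdx f) (pdx g) + ip (pdy f) (pdy g)

lemma gradIp_comm (f g : ℝ × ℝ → ℝ) : gradIp f g = gradIp g f := by
  simp only [gradIp, ip_comm (pdx f), ip_comm (pdy f)]

lemma nsq_eq_ip (f : ℝ × ℝ → ℝ) : nsq f = ip f f := by
  simp only [nsq, ip, sq]

lemma gradNsq_eq_gradIp (f : ℝ × ℝ → ℝ) : gradNsq f = gradIp f f := by
  simp only [gradNsq, gradIp, nsq_eq_ip]

lemma ip_lap_eq_neg_gradIp (hu : ContDiff ℝ ∞ u) (hv : ContDiff ℝ ∞ v)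
    (hb : ∀ p ∈ bdry, v p = 0 ∨ pdx u p = 0 ∧ pdy u p = 0) :
    ip v (lap u) = -gradIp v u := by
  have hflux (p) (hp : p ∈ bdry) : v p * pdx u p = 0 ∧ v p * pdy u p = 0 := by
    rcases hb p hp with h | h <;> simp [h]
  have hx := integral_disk_pdx_eq_zero (F := fun q => v q * pdx u q)
    (by fun_prop (disch := simp)) fun p hp => (hflux p hp).1
  have hy := integral_disk_pdy_eq_zero (F := fun q => v q * pdy u q)
    (by fun_prop (disch := simp)) fun p hp => (hflux p hp).2
  simp (disch := fun_prop (disch := simp)) only [pdx_mul, pdy_mul] at hx hy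
  rw [integral_disk_add (by fun_prop) (by fun_prop)] at hx hy
  simp only [ip, gradIp, lap, mul_add]
  rw [integral_disk_add (by fun_prop) (by fun_prop)]
  linarith

lemma ip_lap_comm (hu : ContDiff ℝ ∞ u) (hv : ContDiff ℝ ∞ v) (hbu : ∀ p ∈ bdry, u p = 0)
    (hb : ∀ p ∈ bdry, v p = 0 ∨ pdx u p = 0 ∧ pdy u p = 0) :
    ip u (lap v) = ip v (lap u) := by
  rw [ip_lap_eq_neg_gradIp hv hu fun p hp => Or.inl (hbu p hp), ip_lap_eq_neg_gradIp hu hv hb,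
    gradIp_comm]

lemma ip_azim_eq_neg (hf : ContDiff ℝ ∞ f) (hg : ContDiff ℝ ∞ g)
    (hb : ∀ p ∈ bdry, f p * g p = 0) :
    ip (azim f) g = -ip f (azim g) := by
  have hx := integral_disk_pdx_eq_zero (F := fun q => q.2 * (f q * g q))
    (by fun_prop (disch := simp)) fun p hp => by simp [hb p hp]
  have hy := integral_disk_pdy_eq_zero (F := fun q => q.1 * (f q * g q))
    (by fun_prop (disch := simp)) fun p hp => by simp [hb p hp]
  rw [eq_neg_iff_add_eq_zero, ip, ip, ← integral_disk_add (by fun_prop) (by fun_prop)]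
  calc ∫ p in disk, (azim f p * g p + f p * azim g p)
      = ∫ p in disk,
          (pdy (fun q => q.1 * (f q * g q)) p - pdx (fun q => q.2 * (f q * g q)) p) := by
        refine setIntegral_congr_fun isOpen_disk.measurableSet fun p _ => ?_
        simp (disch := fun_prop (disch := simp)) only [pdx_mul, pdy_mul, pdx_snd, pdy_fst, azim]
        ring
    _ = 0 := by
        rw [integral_disk_sub (continuous_pdy (by fun_prop (disch := simp)))
          (continuous_pdx (by fun_prop (disch := simp))), hx, hy, sub_zero]

lemma lap_azim_comm (hf : ContDiff ℝ ∞ f) : lap (azim f) = azim (lap f) := by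
  have hxy := pdx_pdy_comm hf
  have hxxy := pdx_pdy_comm (contDiff_pdx hf)
  have hyxy := pdx_pdy_comm (contDiff_pdy hf)
  have hazim : azim f = fun q => q.1 * pdy f q - q.2 * pdx f q := rfl
  have hlap : lap f = fun q => pdx (pdx f) q + pdy (pdy f) q := rfl
  ext p
  rw [lap, hazim, azim, hlap]
  simp (disch := fun_prop (disch := simp)) only [pdx_add, pdy_add, pdx_sub, pdy_sub,
    pdx_mul, pdy_mul, pdx_fst, pdx_snd, pdy_fst, pdy_snd, pdx_const, pdy_const]
  rw [hxy] at hyxy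
  rw [hyxy, hxy, hxxy]
  ring

lemma integral_jac_eq_zero (hg : ContDiff ℝ ∞ g) (hh : ContDiff ℝ ∞ h)
    (hb : ∀ p ∈ bdry, h p = 0) : ∫ p in disk, jac g h p = 0 := by
  have hx := integral_disk_pdx_eq_zero (F := fun q => h q * pdy g q)
    (by fun_prop (disch := simp)) fun p hp => by simp [hb p hp]
  have hy := integral_disk_pdy_eq_zero (F := fun q => h q * pdx g q)
    (by fun_prop (disch := simp)) fun p hp => by simp [hb p hp]
  calc ∫ p in disk, jac g h p
      = ∫ p in disk, (pdy (fun q => h q * pdx g q) p - pdx (fun q => h q * pdy g q) p) := by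
        refine setIntegral_congr_fun isOpen_disk.measurableSet fun p _ => ?_
        simp (disch := fun_prop (disch := simp)) only [pdx_mul, pdy_mul, pdx_pdy_comm hg, jac]
        ring
    _ = 0 := by
        rw [integral_disk_sub (continuous_pdy (by fun_prop (disch := simp)))
          (continuous_pdx (by fun_prop (disch := simp))), hx, hy, sub_zero]

lemma ip_jac_cyclic (hf : ContDiff ℝ ∞ f) (hg : ContDiff ℝ ∞ g) (hh : ContDiff ℝ ∞ h)
    (hb : ∀ p ∈ bdry, f p * h p = 0) : ip f (jac g h) = ip h (jac f g) := by
  have h0 := integral_jac_eq_zero (h := fun q => f q * h q) hg (by fun_prop) hb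
  rw [← sub_eq_zero, ip, ip, ← integral_disk_sub (by fun_prop) (by fun_prop), ← h0]
  refine setIntegral_congr_fun isOpen_disk.measurableSet fun p _ => ?_
  simp (disch := fun_prop (disch := simp)) only [pdx_mul, pdy_mul, jac]
  ring

lemma ip_jac_self (hf : ContDiff ℝ ∞ f) (hg : ContDiff ℝ ∞ g) (hb : ∀ p ∈ bdry, g p = 0) :
    ip g (jac f g) = 0 := by
  have h := ip_jac_cyclic hg hf hg fun p hp => by simp [hb p hp]
  have hanti : ip g (jac g f) = -ip g (jac f g) := by
    rw [ip, ip, ← integral_neg]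
    exact setIntegral_congr_fun isOpen_disk.measurableSet fun p _ => by simp only [jac]; ring
  linarith

end Green

section EnergyIdentity

variable {ε R : ℝ} {a a' b b' : ℝ × ℝ → ℝ}

def energy (ε : ℝ) (a b : ℝ × ℝ → ℝ) : ℝ :=
  nsq a + ε * gradNsq a + gradNsq b + ε * nsq (lap b)

def energyForm (ε : ℝ) (a b a' b' : ℝ × ℝ → ℝ) : ℝ :=
  ip a a' + ε * gradIp a a' + gradIp b b' + ε * ip (lap b) (lap b')

-- `I₁` and `I₂` of the paper.
def dissipation (a b : ℝ × ℝ → ℝ) : ℝ := gradNsq a + nsq (lap b)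

def production (ε : ℝ) (a b : ℝ × ℝ → ℝ) : ℝ := ip (azim b) (fun q => a q - ε * lap a q)

lemma axial_energy_balance (ha : ContDiff ℝ ∞ a) (ha' : ContDiff ℝ ∞ a') (hb : ContDiff ℝ ∞ b)
    (hba : ∀ p ∈ bdry, a p = 0)
    (hpde : EqOn (fun q => a' q - ε * lap a' q)
      (fun q => 1 / R * lap a q + R * azim b q + jac b (fun q => a q - ε * lap a q) q) disk) :
    ip a a' + ε * gradIp a a'
      = -(1 / R) * gradNsq a + R * ip (azim b) a - ε * ip a (jac b (lap a)) := by
  have hjac : jac b (fun q => a q - ε * lap a q) = fun q => jac b a q - ε * jac b (lap a) q := by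
    ext q
    simp (disch := fun_prop (disch := simp)) only [jac, pdx_sub, pdy_sub, pdx_const_mul,
      pdy_const_mul]
    ring
  calc ip a a' + ε * gradIp a a' = ip a (fun q => a' q - ε * lap a' q) := by
        rw [ip_sub_right (by fun_prop) (by fun_prop) (by fun_prop), ip_const_mul_right,
          ip_lap_eq_neg_gradIp ha' ha fun p hp => Or.inl (hba p hp)]
        ring
    _ = ip a (fun q => 1 / R * lap a q + R * azim b q + jac b (fun q => a q - ε * lap a q) q) :=
        ip_congr_right hpde
    _ = _ := by
        rw [hjac]
        simp (disch := fun_prop) only [ip_add_right, ip_sub_right, ip_const_mul_right]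
        rw [ip_lap_eq_neg_gradIp ha ha fun p hp => Or.inl (hba p hp), ip_jac_self hb ha hba,
          ip_comm a (azim b), gradNsq_eq_gradIp]
        ring

lemma stream_energy_balance (ha : ContDiff ℝ ∞ a) (hb : ContDiff ℝ ∞ b) (hb' : ContDiff ℝ ∞ b')
    (hba : ∀ p ∈ bdry, a p = 0) (hbb : ∀ p ∈ bdry, b p = 0 ∧ pdx b p = 0 ∧ pdy b p = 0)
    (hpde : EqOn (fun q => ε * lap (lap b') q - lap b' q)
      (fun q => -(1 / R) * lap (lap b) q + ε * R * lap (azim a) q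
        + jac (fun q => lap b q - ε * lap (lap b) q) b q + ε * jac (lap a) a q) disk) :
    gradIp b b' + ε * ip (lap b) (lap b')
      = -(1 / R) * nsq (lap b) - ε * R * ip (azim b) (lap a) + ε * ip b (jac (lap a) a) := by
  have hb0 (p) (hp : p ∈ bdry) : b p = 0 := (hbb p hp).1
  have hclamp (p) (hp : p ∈ bdry) : pdx b p = 0 ∧ pdy b p = 0 := (hbb p hp).2
  have hrot : ip b (lap (azim a)) = -ip (azim b) (lap a) := by
    have hazim0 (p) (hp : p ∈ bdry) : azim b p = 0 := by simp [azim, hclamp p hp]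
    rw [ip_lap_comm hb (by fun_prop) hb0 fun p hp => Or.inr (hclamp p hp),
      ip_azim_eq_neg ha (by fun_prop) fun p hp => by simp [hba p hp], ← lap_azim_comm hb,
      ← ip_lap_comm (by fun_prop) ha hazim0 fun p hp => Or.inl (hba p hp)]
  calc gradIp b b' + ε * ip (lap b) (lap b') = ip b (fun q => ε * lap (lap b') q - lap b' q) := by
        rw [ip_sub_right (by fun_prop) (by fun_prop) (by fun_prop), ip_const_mul_right,
          ip_lap_eq_neg_gradIp hb' hb fun p hp => Or.inl (hb0 p hp),
          ip_lap_comm hb (by fun_prop) hb0 fun p hp => Or.inr (hclamp p hp), ip_comm (lap b')]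
        ring
    _ = ip b (fun q => -(1 / R) * lap (lap b) q + ε * R * lap (azim a) q
          + jac (fun q => lap b q - ε * lap (lap b) q) b q + ε * jac (lap a) a q) :=
        ip_congr_right hpde
    _ = _ := by
        simp (disch := fun_prop) only [ip_add_right, ip_const_mul_right]
        rw [ip_jac_self (by fun_prop) hb hb0, hrot,
          ip_lap_comm hb (by fun_prop) hb0 fun p hp => Or.inr (hclamp p hp), nsq_eq_ip]
        ring

lemma energyForm_eq (ha : ContDiff ℝ ∞ a) (ha' : ContDiff ℝ ∞ a') (hb : ContDiff ℝ ∞ b)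
    (hb' : ContDiff ℝ ∞ b') (hba : ∀ p ∈ bdry, a p = 0)
    (hbb : ∀ p ∈ bdry, b p = 0 ∧ pdx b p = 0 ∧ pdy b p = 0)
    (hpde₁ : EqOn (fun q => a' q - ε * lap a' q)
      (fun q => 1 / R * lap a q + R * azim b q + jac b (fun q => a q - ε * lap a q) q) disk)
    (hpde₂ : EqOn (fun q => ε * lap (lap b') q - lap b' q)
      (fun q => -(1 / R) * lap (lap b) q + ε * R * lap (azim a) q
        + jac (fun q => lap b q - ε * lap (lap b) q) b q + ε * jac (lap a) a q) disk) :
    energyForm ε a b a' b' = -(1 / R) * dissipation a b + R * production ε a b := by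
  have hA := axial_energy_balance ha ha' hb hba hpde₁
  have hB := stream_energy_balance ha hb hb' hba hbb hpde₂
  rw [ip_jac_cyclic hb (by fun_prop) ha fun p hp => by simp [hba p hp]] at hB
  rw [energyForm, dissipation, production, ip_sub_right (by fun_prop) (by fun_prop) (by fun_prop),
    ip_const_mul_right]
  linear_combination hA + hB

end EnergyIdentity

section TimeDerivative

variable {E : Type*} [NormedAddCommGroup E] [NormedSpace ℝ E] {u : ℝ → E → ℝ}

def tderiv (u : ℝ → E → ℝ) : ℝ → E → ℝ := fun t p => deriv (fun s => u s p) t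

lemma contDiff_slice {n : WithTop ℕ∞} (hu : ContDiff ℝ n (uncurry u)) (t : ℝ) :
    ContDiff ℝ n (u t) :=
  hu.comp (contDiff_const.prodMk contDiff_id)

lemma hasDerivAt_tderiv (hu : Differentiable ℝ (uncurry u)) (t : ℝ) (p : E) :
    HasDerivAt (fun s => u s p) (tderiv u t p) t :=
  ((hu (t, p)).hasFDerivAt.comp_hasDerivAt_of_eq t
    ((hasDerivAt_id t).prodMk (hasDerivAt_const t p)) rfl).differentiableAt.hasDerivAt

lemma uncurry_tderiv (hu : Differentiable ℝ (uncurry u)) :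
    uncurry (tderiv u) = fun q => fderiv ℝ (uncurry u) q (1, 0) := by
  ext ⟨t, p⟩
  exact ((hu (t, p)).hasFDerivAt.comp_hasDerivAt_of_eq t
    ((hasDerivAt_id t).prodMk (hasDerivAt_const t p)) rfl).deriv

lemma uncurry_fderiv_slice (hu : Differentiable ℝ (uncurry u)) (v : E) :
    uncurry (fun t p => fderiv ℝ (u t) p v) = fun q => fderiv ℝ (uncurry u) q (0, v) := by
  ext ⟨t, p⟩
  have h : HasFDerivAt (u t)
      ((fderiv ℝ (uncurry u) (t, p)).comp (ContinuousLinearMap.inr ℝ ℝ E)) p :=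
    (hu (t, p)).hasFDerivAt.comp p (hasFDerivAt_prodMk_right t p)
  simp [h.fderiv]

lemma contDiff_uncurry_tderiv (hu : ContDiff ℝ ∞ (uncurry u)) :
    ContDiff ℝ ∞ (uncurry (tderiv u)) := by
  rw [uncurry_tderiv (hu.differentiable (by simp))]
  exact (hu.fderiv_right le_rfl).clm_apply contDiff_const

lemma contDiff_uncurry_fderiv_slice (hu : ContDiff ℝ ∞ (uncurry u)) (v : E) :
    ContDiff ℝ ∞ (uncurry fun t p => fderiv ℝ (u t) p v) := by
  rw [uncurry_fderiv_slice (hu.differentiable (by simp))]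
  exact (hu.fderiv_right le_rfl).clm_apply contDiff_const

lemma tderiv_fderiv_comm (hu : ContDiff ℝ ∞ (uncurry u)) (v : E) :
    tderiv (fun t p => fderiv ℝ (u t) p v) = fun t p => fderiv ℝ (tderiv u t) p v := by
  ext t p
  have h₁ := congrFun (uncurry_tderiv ((contDiff_uncurry_fderiv_slice hu v).differentiable
    (by simp))) (t, p)
  have h₂ := congrFun (uncurry_fderiv_slice ((contDiff_uncurry_tderiv hu).differentiable
    (by simp)) v) (t, p)
  simp only [uncurry_apply_pair] at h₁ h₂
  rw [h₁, h₂, uncurry_fderiv_slice (hu.differentiable (by simp)), uncurry_tderiv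
    (hu.differentiable (by simp)), fderiv_fderiv_apply_comm hu]

lemma hasDerivAt_setIntegral [MeasurableSpace E] [BorelSpace E] [ProperSpace E] {μ : Measure E}
    [IsFiniteMeasureOnCompacts μ] {S : Set E} (hS : Bornology.IsBounded S)
    (hSm : MeasurableSet S) (hu : ContDiff ℝ 1 (uncurry u)) (t : ℝ) :
    HasDerivAt (fun s => ∫ p in S, u s p ∂μ) (∫ p in S, tderiv u t p ∂μ) t := by
  have hd : Differentiable ℝ (uncurry u) := hu.differentiable one_ne_zero
  have hcont : Continuous (uncurry (tderiv u)) := by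
    rw [uncurry_tderiv hd]
    exact (hu.continuous_fderiv one_ne_zero).clm_apply continuous_const
  have hK : IsCompact (closure S) := hS.isCompact_closure
  have hint {f : E → ℝ} (hf : Continuous f) : IntegrableOn f S μ :=
    (hf.continuousOn.integrableOn_compact hK).mono_set subset_closure
  obtain ⟨C, hC⟩ := ((isCompact_closedBall t 1).prod hK).exists_bound_of_continuousOn
    hcont.continuousOn
  refine (hasDerivAt_integral_of_dominated_loc_of_deriv_le (bound := fun _ => C)
    (Metric.closedBall_mem_nhds t one_pos)
    (Eventually.of_forall fun s =>
      (hu.continuous.comp (Continuous.prodMk_right s)).aestronglyMeasurable)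
    (hint (hu.continuous.comp (Continuous.prodMk_right t)))
    (hcont.comp (Continuous.prodMk_right t)).aestronglyMeasurable
    (ae_restrict_of_forall_mem hSm fun p hp s hs => hC (s, p) ⟨hs, subset_closure hp⟩)
    (integrableOn_const hS.measure_lt_top.ne)
    (ae_of_all _ fun p s _ => hasDerivAt_tderiv hd s p)).2

end TimeDerivative

section PlanarFields

variable {u : ℝ → ℝ × ℝ → ℝ}

lemma pdx_slice (hu : ContDiff ℝ ∞ (uncurry u)) :
    (fun t => pdx (u t)) = fun t p => fderiv ℝ (u t) p (1, 0) :=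
  funext fun t => pdx_eq_fun_fderiv ((contDiff_slice hu t).differentiable (by simp))

lemma pdy_slice (hu : ContDiff ℝ ∞ (uncurry u)) :
    (fun t => pdy (u t)) = fun t p => fderiv ℝ (u t) p (0, 1) :=
  funext fun t => pdy_eq_fun_fderiv ((contDiff_slice hu t).differentiable (by simp))

lemma contDiff_uncurry_pdx (hu : ContDiff ℝ ∞ (uncurry u)) :
    ContDiff ℝ ∞ (uncurry fun t => pdx (u t)) := by
  rw [pdx_slice hu]
  exact contDiff_uncurry_fderiv_slice hu _

lemma contDiff_uncurry_pdy (hu : ContDiff ℝ ∞ (uncurry u)) :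
    ContDiff ℝ ∞ (uncurry fun t => pdy (u t)) := by
  rw [pdy_slice hu]
  exact contDiff_uncurry_fderiv_slice hu _

lemma contDiff_uncurry_lap (hu : ContDiff ℝ ∞ (uncurry u)) :
    ContDiff ℝ ∞ (uncurry fun t => lap (u t)) :=
  (contDiff_uncurry_pdx (contDiff_uncurry_pdx hu)).add
    (contDiff_uncurry_pdy (contDiff_uncurry_pdy hu))

lemma tderiv_pdx (hu : ContDiff ℝ ∞ (uncurry u)) :
    tderiv (fun t => pdx (u t)) = fun t => pdx (tderiv u t) := by
  rw [pdx_slice hu, tderiv_fderiv_comm hu, pdx_slice (contDiff_uncurry_tderiv hu)]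

lemma tderiv_pdy (hu : ContDiff ℝ ∞ (uncurry u)) :
    tderiv (fun t => pdy (u t)) = fun t => pdy (tderiv u t) := by
  rw [pdy_slice hu, tderiv_fderiv_comm hu, pdy_slice (contDiff_uncurry_tderiv hu)]

lemma tderiv_lap (hu : ContDiff ℝ ∞ (uncurry u)) :
    tderiv (fun t => lap (u t)) = fun t => lap (tderiv u t) := by
  have hx := contDiff_uncurry_pdx (contDiff_uncurry_pdx hu)
  have hy := contDiff_uncurry_pdy (contDiff_uncurry_pdy hu)
  ext t p
  have h := (hasDerivAt_tderiv (hx.differentiable (by simp)) t p).add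
    (hasDerivAt_tderiv (hy.differentiable (by simp)) t p)
  rw [tderiv_pdx (contDiff_uncurry_pdx hu), tderiv_pdx hu, tderiv_pdy (contDiff_uncurry_pdy hu),
    tderiv_pdy hu] at h
  exact h.deriv

lemma hasDerivAt_lap (hu : ContDiff ℝ ∞ (uncurry u)) (t : ℝ) (p : ℝ × ℝ) :
    HasDerivAt (fun s => lap (u s) p) (lap (tderiv u t) p) t := by
  have h := hasDerivAt_tderiv ((contDiff_uncurry_lap hu).differentiable (by simp)) t p
  rwa [tderiv_lap hu] at h

lemma deriv_sub_const_mul_lap (hu : ContDiff ℝ ∞ (uncurry u)) (c t : ℝ) (p : ℝ × ℝ) :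
    deriv (fun s => u s p - c * lap (u s) p) t = tderiv u t p - c * lap (tderiv u t) p :=
  ((hasDerivAt_tderiv (hu.differentiable (by simp)) t p).sub
    ((hasDerivAt_lap hu t p).const_mul c)).deriv

lemma deriv_const_mul_lap_lap_sub_lap (hu : ContDiff ℝ ∞ (uncurry u)) (c t : ℝ) (p : ℝ × ℝ) :
    deriv (fun s => c * lap (lap (u s)) p - lap (u s) p) t
      = c * lap (lap (tderiv u t)) p - lap (tderiv u t) p := by
  have h := hasDerivAt_lap (contDiff_uncurry_lap hu) t p
  rw [tderiv_lap hu] at h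
  exact ((h.const_mul c).sub (hasDerivAt_lap hu t p)).deriv

lemma hasDerivAt_nsq (hu : ContDiff ℝ 1 (uncurry u)) (t : ℝ) :
    HasDerivAt (fun s => nsq (u s)) (2 * ip (u t) (tderiv u t)) t := by
  have hd : Differentiable ℝ (uncurry u) := hu.differentiable one_ne_zero
  have h := hasDerivAt_setIntegral (μ := volume)
    (Metric.isBounded_closedBall.subset disk_subset_closedBall) isOpen_disk.measurableSet
    (u := fun s p => u s p ^ 2) (hu.pow 2) t
  have hsq : tderiv (fun s p => u s p ^ 2) t = fun p => 2 * (u t p * tderiv u t p) := by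
    ext p
    rw [tderiv, ((hasDerivAt_tderiv hd t p).fun_pow 2).deriv]
    ring
  rwa [hsq, integral_const_mul] at h

end PlanarFields

section EnergyDecay

lemma hasDerivAt_energy {ε : ℝ} {w ψ : ℝ → ℝ × ℝ → ℝ} (hw : ContDiff ℝ ∞ (uncurry w))
    (hψ : ContDiff ℝ ∞ (uncurry ψ)) (t : ℝ) :
    HasDerivAt (fun s => energy ε (w s) (ψ s))
      (2 * energyForm ε (w t) (ψ t) (tderiv w t) (tderiv ψ t)) t := by
  have key {v : ℝ → ℝ × ℝ → ℝ} (hv : ContDiff ℝ ∞ (uncurry v)) :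
      HasDerivAt (fun s => nsq (v s)) (2 * ip (v t) (tderiv v t)) t :=
    hasDerivAt_nsq (hv.of_le (by simp)) t
  have h := (((key hw).fun_add (((key (contDiff_uncurry_pdx hw)).fun_add
    (key (contDiff_uncurry_pdy hw))).const_mul ε)).fun_add
    ((key (contDiff_uncurry_pdx hψ)).fun_add (key (contDiff_uncurry_pdy hψ)))).fun_add
    ((key (contDiff_uncurry_lap hψ)).const_mul ε)
  rw [tderiv_pdx hw, tderiv_pdy hw, tderiv_pdx hψ, tderiv_pdy hψ, tderiv_lap hψ] at h
  refine h.congr_deriv ?_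
  simp only [energyForm, gradIp]
  ring

lemma le_exp_neg_mul_of_hasDerivAt {f f' : ℝ → ℝ} {c : ℝ} (hf : ∀ t, HasDerivAt f (f' t) t)
    (hf' : ∀ t, f' t ≤ -c * f t) {t : ℝ} (ht : 0 ≤ t) : f t ≤ Real.exp (-c * t) * f 0 := by
  have h := le_gronwallBound_of_liminf_deriv_right_le (K := -c) (ε := 0) (a := 0)
    (fun x _ => (hf x).continuousAt.continuousWithinAt)
    (fun x _ _ hr => (hf x).hasDerivWithinAt.liminf_right_slope_le hr) le_rfl
    (fun x _ => by rw [add_zero]; exact hf' x) t ⟨ht, le_rfl⟩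
  rwa [gronwallBound_ε0, sub_zero, mul_comm] at h

lemma one_div_sq_sub_one_div_sq_pos {R RE : ℝ} (hR : 0 < R) (hRRE : R < RE) :
    0 < 1 / R ^ 2 - 1 / RE ^ 2 :=
  sub_pos.mpr (one_div_lt_one_div_of_lt (by positivity) (pow_lt_pow_left₀ hRRE hR.le two_ne_zero))

def decayRate (ε η R RE : ℝ) : ℝ := 2 * R * η / (1 + ε * η) * (1 / R ^ 2 - 1 / RE ^ 2)

lemma decayRate_pos {ε η R RE : ℝ} (hε : 0 ≤ ε) (hη : 0 < η) (hR : 0 < R) (hRRE : R < RE) :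
    0 < decayRate ε η R RE := by
  have := one_div_sq_sub_one_div_sq_pos hR hRRE
  unfold decayRate
  positivity

lemma mul_energy_le_dissipation {ε η : ℝ} {a b : ℝ × ℝ → ℝ} (ha : η * nsq a ≤ gradNsq a)
    (hb : η * gradNsq b ≤ nsq (lap b)) :
    η * energy ε a b ≤ (1 + ε * η) * dissipation a b := by
  simp only [energy, dissipation]
  linarith

lemma energy_rate_le_neg_decayRate_mul {ε η R RE E I₁ I₂ : ℝ} (hε : 0 ≤ ε) (hη : 0 < η)
    (hR : 0 < R) (hRRE : R < RE) (hI₂ : I₂ ≤ I₁ / RE ^ 2) (hE : η * E ≤ (1 + ε * η) * I₁) :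
    2 * (-(1 / R) * I₁ + R * I₂) ≤ -decayRate ε η R RE * E := by
  have hεη : 0 < 1 + ε * η := by positivity
  set K := 2 * R * (1 / R ^ 2 - 1 / RE ^ 2)
  have hK : 0 < K := mul_pos (by positivity) (one_div_sq_sub_one_div_sq_pos hR hRRE)
  have h₁ : 2 * (-(1 / R) * I₁ + R * I₂) ≤ -K * I₁ := by
    have : -K * I₁ = 2 * (-(1 / R) * I₁ + R * (I₁ / RE ^ 2)) := by
      simp only [K]; field_simp; ring
    nlinarith [mul_le_mul_of_nonneg_left hI₂ hR.le]
  have h₂ : decayRate ε η R RE * E ≤ K * I₁ := by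
    rw [show decayRate ε η R RE * E = K / (1 + ε * η) * (η * E) by simp only [decayRate, K]; ring,
      div_mul_eq_mul_div, div_le_iff₀ hεη]
    nlinarith [mul_le_mul_of_nonneg_left hE hK.le]
  linarith

end EnergyDecay

theorem energy_stability_general (ε η RE R : ℝ) (hε : 0 ≤ ε) (hη : 0 < η)
    (hR : 0 < R) (hRRE : R < RE)
    (w ψ : ℝ → ℝ × ℝ → ℝ)
    (hw : ContDiff ℝ (⊤ : ℕ∞) (fun q : ℝ × (ℝ × ℝ) => w q.1 q.2))
    (hψ : ContDiff ℝ (⊤ : ℕ∞) (fun q : ℝ × (ℝ × ℝ) => ψ q.1 q.2))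
    (heq1 : ∀ t : ℝ, ∀ p ∈ disk,
      deriv (fun s => w s p - ε * lap (w s) p) t
        = (1 / R) * lap (w t) p + R * azim (ψ t) p
          + jac (ψ t) (fun q => w t q - ε * lap (w t) q) p)
    (heq2 : ∀ t : ℝ, ∀ p ∈ disk,
      deriv (fun s => ε * lap (lap (ψ s)) p - lap (ψ s) p) t
        = -(1 / R) * lap (lap (ψ t)) p + ε * R * lap (azim (w t)) p
          + jac (fun q => lap (ψ t) q - ε * lap (lap (ψ t)) q) (ψ t) p
          + ε * jac (lap (w t)) (w t) p)
    (hbc : ∀ t : ℝ, ∀ p ∈ bdry,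
      w t p = 0 ∧ ψ t p = 0 ∧ pdx (ψ t) p = 0 ∧ pdy (ψ t) p = 0)
    (hI2 : ∀ t : ℝ,
      ip (azim (ψ t)) (fun q => w t q - ε * lap (w t) q)
        ≤ (gradNsq (w t) + nsq (lap (ψ t))) / RE ^ 2)
    (hpw : ∀ t : ℝ, gradNsq (w t) ≥ η * nsq (w t))
    (hpψ : ∀ t : ℝ, nsq (lap (ψ t)) ≥ η * gradNsq (ψ t))
    (cR : ℝ) (hcR : cR = (2 * R * η / (1 + ε * η)) * (1 / R ^ 2 - 1 / RE ^ 2)) :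
    0 < cR ∧
    ∀ t : ℝ, 0 ≤ t →
      nsq (w t) + ε * gradNsq (w t) + gradNsq (ψ t) + ε * nsq (lap (ψ t))
        ≤ Real.exp (-cR * t) *
          (nsq (w 0) + ε * gradNsq (w 0) + gradNsq (ψ 0) + ε * nsq (lap (ψ 0))) := by
  have hderiv (t : ℝ) : HasDerivAt (fun s => energy ε (w s) (ψ s))
      (2 * (-(1 / R) * dissipation (w t) (ψ t) + R * production ε (w t) (ψ t))) t := by
    rw [← energyForm_eq (contDiff_slice hw t) (contDiff_slice (contDiff_uncurry_tderiv hw) t)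
      (contDiff_slice hψ t) (contDiff_slice (contDiff_uncurry_tderiv hψ) t)
      (fun p hp => (hbc t p hp).1) (fun p hp => (hbc t p hp).2)
      (fun p hp => (deriv_sub_const_mul_lap hw ε t p).symm.trans (heq1 t p hp))
      (fun p hp => (deriv_const_mul_lap_lap_sub_lap hψ ε t p).symm.trans (heq2 t p hp))]
    exact hasDerivAt_energy hw hψ t
  subst hcR
  refine ⟨decayRate_pos hε hη hR hRRE, fun t ht => le_exp_neg_mul_of_hasDerivAt hderiv ?_ ht⟩
  exact fun s => energy_rate_le_neg_decayRate_mul hε hη hR hRRE (hI2 s)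
    (mul_energy_le_dissipation (hpw s) (hpψ s))

/-- Energy stability: for `R < R_E` every disturbance decays to the base flow
at least exponentially, `E(t) ≤ e^{−c_R t} E(0)` with
`c_R = (2Rη/(1+εη))(1/R² − 1/R_E²) > 0`. -/
theorem energy_stability (ε η RE R : ℝ) (hε : 0 ≤ ε) (hη : 0 < η)
    (hRE : 0 < RE) (hR : 0 < R) (hRRE : R < RE)
    (w ψ : ℝ → ℝ × ℝ → ℝ)
    (hw : ContDiff ℝ (⊤ : ℕ∞) (fun q : ℝ × (ℝ × ℝ) => w q.1 q.2))
    (hψ : ContDiff ℝ (⊤ : ℕ∞) (fun q : ℝ × (ℝ × ℝ) => ψ q.1 q.2))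
    (heq1 : ∀ t : ℝ, ∀ p ∈ disk,
      deriv (fun s => w s p - ε * lap (w s) p) t
        = (1 / R) * lap (w t) p + R * azim (ψ t) p
          + jac (ψ t) (fun q => w t q - ε * lap (w t) q) p)
    (heq2 : ∀ t : ℝ, ∀ p ∈ disk,
      deriv (fun s => ε * lap (lap (ψ s)) p - lap (ψ s) p) t
        = -(1 / R) * lap (lap (ψ t)) p + ε * R * lap (azim (w t)) p
          + jac (fun q => lap (ψ t) q - ε * lap (lap (ψ t)) q) (ψ t) p
          + ε * jac (lap (w t)) (w t) p)
    (hbc : ∀ t : ℝ, ∀ p ∈ bdry,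
      w t p = 0 ∧ ψ t p = 0 ∧ pdx (ψ t) p = 0 ∧ pdy (ψ t) p = 0)
    (hI2 : ∀ t : ℝ,
      ip (azim (ψ t)) (fun q => w t q - ε * lap (w t) q)
        ≤ (gradNsq (w t) + nsq (lap (ψ t))) / RE ^ 2)
    (hpw : ∀ t : ℝ, gradNsq (w t) ≥ η * nsq (w t))
    (hpψ : ∀ t : ℝ, nsq (lap (ψ t)) ≥ η * gradNsq (ψ t))
    (cR : ℝ) (hcR : cR = (2 * R * η / (1 + ε * η)) * (1 / R ^ 2 - 1 / RE ^ 2)) :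
    0 < cR ∧
    ∀ t : ℝ, 0 ≤ t →
      nsq (w t) + ε * gradNsq (w t) + gradNsq (ψ t) + ε * nsq (lap (ψ t))
        ≤ Real.exp (-cR * t) *
          (nsq (w 0) + ε * gradNsq (w 0) + gradNsq (ψ 0) + ε * nsq (lap (ψ 0))) :=
  energy_stability_general ε η RE R hε hη hR hRRE w ψ hw hψ heq1 heq2 hbc hI2 hpw hpψ cR hcR
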